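/- Let L be a finite G-lattice and let x, y ∈ L with x < y. Then the transfer system ⌊x → y⌋ is a join-irreducible element of the lattice Tr(L) of transfer systems on L. -/

import Mathlib

/-- A transfer system on a `G`-lattice `L`: a partial order refining `≤`,
closed under the `G`-action and under restriction. -/
structure TransferSystem (G L : Type*) [Group G] [Lattice L] [MulAction G L] : Type _ where
  rel : L → L → Prop
  refl : ∀ x, rel x x
  trans : ∀ {x y z}, rel x y → rel y z → rel x z
  le_of_rel : ∀ {x y}, rel x y → x ≤ y
  smul_rel : ∀ (g : G) {x y}, rel x y → rel (g • x) (g • y)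
  restrict : ∀ {x y x'}, rel x y → x' ≤ y → rel (x ⊓ x') x'

namespace TransferSystem

variable {G L : Type*} [Group G] [Lattice L] [MulAction G L]
  [CovariantClass G L (· • ·) (· ≤ ·)]

theorem ext' {S T : TransferSystem G L} (h : S.rel = T.rel) : S = T := by
  cases S; cases T; simpa using h

instance : PartialOrder (TransferSystem G L) where
  le S T := ∀ ⦃x y : L⦄, S.rel x y → T.rel x y
  le_refl S := fun _ _ h => h
  le_trans S T U h1 h2 := fun _ _ h => h2 (h1 h)
  le_antisymm S T h1 h2 :=
    ext' (by funext x y; exact propext ⟨fun h => h1 h, fun h => h2 h⟩)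

lemma smul_mono' (g : G) {x y : L} (h : x ≤ y) : g • x ≤ g • y :=
  CovariantClass.elim g h

/-- The intersection of a set of transfer systems. -/
def sInfTS (s : Set (TransferSystem G L)) : TransferSystem G L where
  rel x y := x ≤ y ∧ ∀ T ∈ s, T.rel x y
  refl x := ⟨le_refl x, fun T _ => T.refl x⟩
  trans h1 h2 := ⟨h1.1.trans h2.1, fun T hT => T.trans (h1.2 T hT) (h2.2 T hT)⟩
  le_of_rel h := h.1
  smul_rel g _ _ h := ⟨smul_mono' g h.1, fun T hT => T.smul_rel g (h.2 T hT)⟩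
  restrict h hle := ⟨inf_le_right, fun T hT => T.restrict (h.2 T hT) hle⟩

instance : InfSet (TransferSystem G L) := ⟨sInfTS⟩

theorem sInf_rel (s : Set (TransferSystem G L)) (x y : L) :
    (sInf s).rel x y ↔ x ≤ y ∧ ∀ T ∈ s, T.rel x y := Iff.rfl

/-- The lattice of transfer systems, ordered by refinement. -/
instance : CompleteLattice (TransferSystem G L) :=
  completeLatticeOfInf _ (fun s =>
    ⟨fun T hT _ _ h => h.2 T hT,
     fun T hT _ _ h => ((sInf_rel s _ _).2 ⟨T.le_of_rel h, fun S hS => hT hS h⟩)⟩)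

/-- `⌊x → y⌋`, the smallest transfer system containing the pair `(x, y)`. -/
def gen (x y : L) : TransferSystem G L := sInf {T : TransferSystem G L | T.rel x y}

end TransferSystem


/-!
Since `G` is finite and acts by order automorphisms, `x ≤ g • x` forces `g • x = x`. Hence the
arrows `a → b` with `a = b`, or `a ≤ b` and `a` below some translate of `x`, form a transfer
system containing `x → y` in which the only arrows into `y` from elements above `x` are `x → y`
and `y → y`; the same then holds in `⌊x → y⌋`. The join `S ⊔ T` of two transfer systems is the
reflexive-transitive closure of their union, so if `S ⊔ T = ⌊x → y⌋`, walking back along a chain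
from `x` to `y` shows that its last arrow is `x → y` itself, which therefore lies in `S` or `T`.
-/

namespace TransferSystem

open Relation

variable {G L : Type*} [Group G] [Lattice L] [MulAction G L]
  [CovariantClass G L (· • ·) (· ≤ ·)]

def diagonal : TransferSystem G L where
  rel a b := a = b
  refl _ := rfl
  trans hab hbc := hab.trans hbc
  le_of_rel h := h.le
  smul_rel g _ _ h := congrArg (g • ·) h
  restrict := by
    rintro a _ a' rfl ha'
    exact inf_eq_right.mpr ha'

theorem bot_rel_iff {a b : L} : (⊥ : TransferSystem G L).rel a b ↔ a = b :=
  ⟨fun h => (bot_le : ⊥ ≤ (diagonal : TransferSystem G L)) h, fun h => h ▸ refl _ a⟩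

theorem rel_gen_self {x y : L} (h : x ≤ y) : (gen (G := G) x y).rel x y :=
  (sInf_rel _ _ _).2 ⟨h, fun _ hT => hT⟩

theorem gen_le_of_rel {x y : L} {T : TransferSystem G L} (h : T.rel x y) : gen x y ≤ T :=
  sInf_le h

def belowOrbit (x : L) : TransferSystem G L where
  rel a b := a = b ∨ a ≤ b ∧ ∃ g : G, a ≤ g • x
  refl _ := .inl rfl
  trans := by
    rintro a b c (rfl | ⟨hab, g, hg⟩) hbc
    · exact hbc
    · obtain rfl | ⟨hbc, -⟩ := hbc
      exacts [.inr ⟨hab, g, hg⟩, .inr ⟨hab.trans hbc, g, hg⟩]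
  le_of_rel := by
    rintro a b (rfl | ⟨hab, -⟩)
    exacts [le_rfl, hab]
  smul_rel g := by
    rintro a b (rfl | ⟨hab, h, hh⟩)
    · exact .inl rfl
    · exact .inr ⟨smul_mono' g hab, g * h, mul_smul g h x ▸ smul_mono' g hh⟩
  restrict := by
    rintro a b a' (rfl | ⟨-, g, hg⟩) ha'
    · exact .inl (inf_eq_right.mpr ha')
    · exact .inr ⟨inf_le_right, g, inf_le_left.trans hg⟩

theorem eq_or_eq_of_gen_rel [Finite G] {x y a : L} (hxy : x ≤ y)
    (h : (gen (G := G) x y).rel a y) (hxa : x ≤ a) : a = x ∨ a = y := by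
  obtain rfl | ⟨-, g, hag⟩ :=
    gen_le_of_rel (T := belowOrbit x) (.inr ⟨hxy, 1, (one_smul G x).ge⟩) h
  · exact .inr rfl
  · exact .inl (le_antisymm (hag.trans_eq (smul_eq_of_le_smul (hxa.trans hag))) hxa)

def chainSup (S T : TransferSystem G L) : TransferSystem G L where
  rel := ReflTransGen fun u v => S.rel u v ∨ T.rel u v
  refl _ := .refl
  trans hab hbc := hab.trans hbc
  le_of_rel h := by
    induction h with
    | refl => exact le_rfl
    | tail _ step ih => exact ih.trans (step.elim S.le_of_rel T.le_of_rel)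
  smul_rel g _ _ h := by
    induction h with
    | refl => exact .refl
    | tail _ step ih => exact ih.tail (step.imp (S.smul_rel g) (T.smul_rel g))
  restrict := by
    intro a b a' h ha'
    induction h using ReflTransGen.head_induction_on with
    | refl => rw [inf_eq_right.mpr ha']
    | @head c u step _ ih =>
      -- restricting `c → u` along `u ⊓ a' ≤ u` gives `c ⊓ a' → u ⊓ a'`
      have hcu : c ⊓ (u ⊓ a') = c ⊓ a' := by
        rw [← inf_assoc, inf_eq_left.mpr (step.elim S.le_of_rel T.le_of_rel)]
      refine .head ?_ ih
      exact step.imp (fun h => hcu ▸ S.restrict h inf_le_left)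
        (fun h => hcu ▸ T.restrict h inf_le_left)

theorem sup_rel_iff {S T : TransferSystem G L} {a b : L} :
    (S ⊔ T).rel a b ↔ ReflTransGen (fun u v => S.rel u v ∨ T.rel u v) a b := by
  refine ⟨fun h => sup_le (c := chainSup S T) (fun _ _ h => .single (.inl h))
    (fun _ _ h => .single (.inr h)) h, fun h => ?_⟩
  induction h with
  | refl => exact refl _ _
  | tail _ step ih =>
    exact (S ⊔ T).trans ih (step.elim (fun h => le_sup_left (b := T) h)
      (fun h => le_sup_right (a := S) h))

theorem eq_of_reflTransGen_of_le_gen [Finite G] {x y : L} (hxy : x ≤ y)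
    {r : L → L → Prop} (hr : ∀ ⦃a b⦄, r a b → (gen (G := G) x y).rel a b) (hrxy : ¬r x y)
    {a : L} (ha : ReflTransGen r a y) (hxa : x ≤ a) : a = y := by
  induction ha using ReflTransGen.head_induction_on with
  | refl => rfl
  | @head a u hau _ ih =>
    obtain rfl := ih (hxa.trans (le_of_rel _ (hr hau)))
    obtain rfl | rfl := eq_or_eq_of_gen_rel hxy (hr hau) hxa
    exacts [absurd hau hrxy, rfl]

end TransferSystem

open TransferSystem in
theorem supIrred_gen_general {G L : Type*} [Group G] [Finite G] [Lattice L]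
    [MulAction G L] [CovariantClass G L (· • ·) (· ≤ ·)]
    (x y : L) (hxy : x < y) :
    SupIrred (TransferSystem.gen (G := G) x y) := by
  refine ⟨fun hmin => hxy.ne (bot_rel_iff.1 (hmin.eq_bot ▸ rel_gen_self hxy.le)), ?_⟩
  intro S T hST
  have hSgen : S ≤ gen x y := hST ▸ le_sup_left
  have hTgen : T ≤ gen x y := hST ▸ le_sup_right
  by_contra! hne
  have hS : ¬S.rel x y := fun h => hne.1 (le_antisymm hSgen (gen_le_of_rel h))
  have hT : ¬T.rel x y := fun h => hne.2 (le_antisymm hTgen (gen_le_of_rel h))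
  have hchain := sup_rel_iff.1 (hST ▸ rel_gen_self hxy.le : (S ⊔ T).rel x y)
  have hunion : ∀ ⦃a b⦄, S.rel a b ∨ T.rel a b → (gen (G := G) x y).rel a b :=
    fun _ _ h => h.elim (fun h => hSgen h) (fun h => hTgen h)
  exact hxy.ne <|
    eq_of_reflTransGen_of_le_gen hxy.le hunion (not_or.2 ⟨hS, hT⟩) hchain le_rfl

/-- For `x < y` in a finite `G`-lattice, `⌊x → y⌋` is a join-irreducible
element of `Tr(L)`. -/
theorem supIrred_gen {G L : Type*} [Group G] [Finite G] [Lattice L] [Finite L]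
    [MulAction G L] [CovariantClass G L (· • ·) (· ≤ ·)]
    (x y : L) (hxy : x < y) :
    SupIrred (TransferSystem.gen (G := G) x y) :=
  supIrred_gen_general x y hxy
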